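/- arXiv:2301.13369 — 4 statements merged into one kernel-verified Lean document; each statement's English description precedes it below -/
import Mathlib

section
/- If k : ℝ^n → ℝ is continuous, bounded, nonnegative, integrates to 1, and its Fourier transform satisfies k̂(ξ) = 1 - A|ξ|² + o(|ξ|²) as ξ → 0 for some constant A > 0, then ∫ |x|² k(x) dx < ∞ and (1/(2n))∫ |x|² k(x) dx ≤ A. -/
/-!
The real part of the Fourier transform is `φ ξ = ∫ cos ⟪x, ξ⟫ k x`, so the expansion gives
`(1 - φ (t • v)) / t² → A` as `t → 0` for every unit vector `v`. Since
`2 (1 - cos (t s)) / t² → s²` and these integrands are nonnegative, Fatou's lemma bounds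
`∫ ⟪x, v⟫² k x` by `2A`; summing over the `n` coordinate directions gives `∫ ‖x‖² k x ≤ 2nA`.
-/

open MeasureTheory Filter Asymptotics

open Real Topology ENNReal

theorem tendsto_one_sub_cos_mul_div_sq (a : ℝ) :
    Tendsto (fun t : ℝ => (1 - cos (t * a)) / t ^ 2) (𝓝[≠] 0) (𝓝 (a ^ 2 / 2)) := by
  have hsinc : Tendsto (fun t : ℝ => a ^ 2 / 2 * sinc (t * a / 2) ^ 2) (𝓝 0) (𝓝 (a ^ 2 / 2)) := by
    simpa using ((continuous_sinc.comp (by fun_prop : Continuous fun t : ℝ => t * a / 2)).pow 2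
      |>.const_mul (a ^ 2 / 2)).tendsto 0
  refine (hsinc.mono_left nhdsWithin_le_nhds).congr' ?_
  filter_upwards [self_mem_nhdsWithin] with t ht
  rcases eq_or_ne a 0 with rfl | ha
  · simp
  have hta : t * a / 2 ≠ 0 := by simp_all
  have hcos : 1 - cos (t * a) = 2 * sin (t * a / 2) ^ 2 := by
    have := cos_two_mul_eq_one_sub (t * a / 2)
    rw [show 2 * (t * a / 2) = t * a by ring] at this
    linarith
  rw [sinc_of_ne_zero hta, hcos]
  field_simp

section MeasureSpace

variable {α : Type*} [MeasurableSpace α] {μ : Measure α} {k g : α → ℝ}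

theorem integrable_one_sub_cos_mul (hk : Integrable k μ) (hg : Measurable g) (t : ℝ) :
    Integrable (fun x => (1 - cos (t * g x)) * k x) μ :=
  hk.bdd_mul (c := 2) (by fun_prop) <| Eventually.of_forall fun x => by
    rw [Real.norm_eq_abs, abs_le]
    constructor <;> linarith [cos_le_one (t * g x), neg_one_le_cos (t * g x)]

theorem lintegral_sq_mul_le_of_tendsto (hk : Integrable k μ) (hk_nonneg : ∀ x, 0 ≤ k x)
    (hg : Measurable g) {L : ℝ}
    (hL : Tendsto (fun t => (∫ x, (1 - cos (t * g x)) * k x ∂μ) / t ^ 2) (𝓝[≠] 0) (𝓝 L)) :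
    ∫⁻ x, ENNReal.ofReal (g x ^ 2 * k x) ∂μ ≤ ENNReal.ofReal (2 * L) := by
  set F : ℝ → α → ℝ≥0∞ := fun t x => ENNReal.ofReal (2 * ((1 - cos (t * g x)) / t ^ 2) * k x)
  have hF_lim : ∀ x, Tendsto (F · x) (𝓝[≠] 0) (𝓝 (ENNReal.ofReal (g x ^ 2 * k x))) := by
    intro x
    have := ((tendsto_one_sub_cos_mul_div_sq (g x)).const_mul 2).mul_const (k x)
    rw [mul_div_cancel₀ _ two_ne_zero] at this
    exact ENNReal.tendsto_ofReal this
  have hF_int : ∀ t, ∫⁻ x, F t x ∂μ =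
      ENNReal.ofReal (2 * ((∫ x, (1 - cos (t * g x)) * k x ∂μ) / t ^ 2)) := by
    intro t
    have hnonneg : ∀ x, 0 ≤ 2 * ((1 - cos (t * g x)) / t ^ 2) * k x := fun x => by
      have := cos_le_one (t * g x)
      have := hk_nonneg x
      positivity
    rw [← ofReal_integral_eq_lintegral_ofReal _ (Eventually.of_forall hnonneg)]
    · simp only [mul_div_assoc', div_mul_eq_mul_div, integral_div, integral_const_mul, mul_assoc]
    · simpa only [mul_div_assoc', div_mul_eq_mul_div, mul_assoc] using
        ((integrable_one_sub_cos_mul hk hg t).const_mul 2).div_const (t ^ 2)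
  calc ∫⁻ x, ENNReal.ofReal (g x ^ 2 * k x) ∂μ
      = ∫⁻ x, liminf (F · x) (𝓝[≠] 0) ∂μ := lintegral_congr fun x => (hF_lim x).liminf_eq.symm
    _ ≤ liminf (fun t => ∫⁻ x, F t x ∂μ) (𝓝[≠] 0) := lintegral_liminf_le' fun t => by fun_prop
    _ = ENNReal.ofReal (2 * L) := by
        simp only [hF_int]
        exact (ENNReal.tendsto_ofReal (hL.const_mul 2)).liminf_eq

theorem re_integral_exp_neg_I_mul_mul (hk : Integrable k μ) (hg : Measurable g) :
    (∫ x, Complex.exp (-(Complex.I * (g x : ℂ))) * (k x : ℂ) ∂μ).re =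
      ∫ x, cos (g x) * k x ∂μ := by
  have hexp : ∀ x, Complex.exp (-(Complex.I * (g x : ℂ))) =
      Complex.exp (((-g x : ℝ) : ℂ) * Complex.I) := fun x => by push_cast; ring_nf
  have hint : Integrable (fun x => Complex.exp (-(Complex.I * (g x : ℂ))) * (k x : ℂ)) μ :=
    hk.ofReal.bdd_mul (c := 1) (by fun_prop) <| Eventually.of_forall fun x => by
      rw [hexp, Complex.norm_exp_ofReal_mul_I]
  rw [← RCLike.re_to_complex, ← integral_re hint]
  congr 1 with x
  rw [hexp, Complex.exp_mul_I]
  simp [Complex.cos_ofReal_re, Complex.sin_ofReal_re]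

theorem integrable_and_integral_le_of_lintegral_ofReal_le {f : α → ℝ}
    (hf : AEStronglyMeasurable f μ) (hf_nonneg : 0 ≤ᵐ[μ] f) {c : ℝ} (hc : 0 ≤ c)
    (h : ∫⁻ x, ENNReal.ofReal (f x) ∂μ ≤ ENNReal.ofReal c) :
    Integrable f μ ∧ ∫ x, f x ∂μ ≤ c :=
  ⟨⟨hf, (hasFiniteIntegral_iff_ofReal hf_nonneg).2 (h.trans_lt ofReal_lt_top)⟩,
    integral_eq_lintegral_of_nonneg_ae hf_nonneg hf ▸ ENNReal.toReal_le_of_le_ofReal hc h⟩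

end MeasureSpace

theorem tendsto_one_sub_comp_smul_div_sq {E : Type*} [NormedAddCommGroup E] [NormedSpace ℝ E]
    {f : E → ℝ} {A : ℝ} (hf : (fun ξ => f ξ - (1 - A * ‖ξ‖ ^ 2)) =o[𝓝 0] fun ξ => ‖ξ‖ ^ 2)
    {v : E} (hv : ‖v‖ = 1) :
    Tendsto (fun t : ℝ => (1 - f (t • v)) / t ^ 2) (𝓝[≠] 0) (𝓝 A) := by
  have hline : Tendsto (fun t : ℝ => t • v) (𝓝[≠] 0) (𝓝 0) :=
    ((by fun_prop : Continuous fun t : ℝ => t • v).tendsto' 0 0 (zero_smul ℝ v)).mono_left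
      nhdsWithin_le_nhds
  have hrem := (hf.tendsto_div_nhds_zero.comp hline).const_sub A
  rw [sub_zero] at hrem
  refine hrem.congr' ?_
  filter_upwards [self_mem_nhdsWithin] with t (ht : t ≠ 0)
  simp only [Function.comp_apply, norm_smul, hv, mul_one, Real.norm_eq_abs, sq_abs]
  field_simp
  ring

theorem lintegral_inner_sq_mul_le_of_isLittleO {E : Type*} [NormedAddCommGroup E]
    [InnerProductSpace ℝ E] [MeasurableSpace E] [OpensMeasurableSpace E] {μ : Measure E}
    {k : E → ℝ} (hk : Integrable k μ) (hk_nonneg : ∀ x, 0 ≤ k x) (hk_int : ∫ x, k x ∂μ = 1)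
    {A : ℝ} (hφ : (fun ξ => (∫ x, cos (inner ℝ x ξ) * k x ∂μ) - (1 - A * ‖ξ‖ ^ 2))
      =o[𝓝 0] fun ξ => ‖ξ‖ ^ 2)
    {v : E} (hv : ‖v‖ = 1) :
    ∫⁻ x, ENNReal.ofReal (inner ℝ x v ^ 2 * k x) ∂μ ≤ ENNReal.ofReal (2 * A) := by
  have hv_meas : Measurable fun x : E => inner ℝ x v := by fun_prop
  have hcos_int (t : ℝ) : Integrable (fun x => cos (t * inner ℝ x v) * k x) μ :=
    hk.bdd_mul (c := 1) (by fun_prop) <| Eventually.of_forall fun x => by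
      simpa using abs_cos_le_one _
  refine lintegral_sq_mul_le_of_tendsto hk hk_nonneg hv_meas
    ((tendsto_one_sub_comp_smul_div_sq hφ hv).congr fun t => ?_)
  calc (1 - ∫ x, cos (inner ℝ x (t • v)) * k x ∂μ) / t ^ 2
      = ((∫ x, k x ∂μ) - ∫ x, cos (t * inner ℝ x v) * k x ∂μ) / t ^ 2 := by
        simp only [hk_int, real_inner_smul_right]
    _ = (∫ x, (1 - cos (t * inner ℝ x v)) * k x ∂μ) / t ^ 2 := by
        rw [← integral_sub hk (hcos_int t)]
        congr 2 with x
        ring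

theorem lintegral_ofReal_norm_sq_mul_eq_sum {ι : Type*} [Fintype ι]
    {μ : Measure (EuclideanSpace ℝ ι)} {k : EuclideanSpace ℝ ι → ℝ} (hk : AEMeasurable k μ)
    (hk_nonneg : ∀ x, 0 ≤ k x) :
    ∫⁻ x, ENNReal.ofReal (‖x‖ ^ 2 * k x) ∂μ = ∑ i, ∫⁻ x, ENNReal.ofReal (x i ^ 2 * k x) ∂μ := by
  rw [← lintegral_finsetSum' _ fun i _ => by fun_prop]
  refine lintegral_congr fun x => ?_
  rw [EuclideanSpace.real_norm_sq_eq, Finset.sum_mul,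
    ENNReal.ofReal_sum_of_nonneg fun i _ => mul_nonneg (sq_nonneg _) (hk_nonneg x)]

theorem stmt_1_general (n : ℕ) (k : EuclideanSpace ℝ (Fin n) → ℝ)
    (hk_cont : Continuous k)
    (hk_nonneg : ∀ x, 0 ≤ k x)
    (hk_int : ∫ x, k x = 1)
    (A : ℝ) (hA : 0 < A)
    (hFT : (fun ξ : EuclideanSpace ℝ (Fin n) =>
        (∫ x, Complex.exp (-(Complex.I * ((inner ℝ x ξ : ℝ) : ℂ))) * (k x : ℂ))
          - (1 - (A : ℂ) * (‖ξ‖ ^ 2 : ℝ)))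
      =o[nhds (0 : EuclideanSpace ℝ (Fin n))] (fun ξ => ‖ξ‖ ^ 2)) :
    Integrable (fun x : EuclideanSpace ℝ (Fin n) => ‖x‖ ^ 2 * k x) ∧
      (1 / (2 * n)) * ∫ x, ‖x‖ ^ 2 * k x ≤ A := by
  have hk : Integrable k := .of_integral_ne_zero (by simp [hk_int])
  have hφ : (fun ξ : EuclideanSpace ℝ (Fin n) =>
      (∫ x, cos (inner ℝ x ξ) * k x) - (1 - A * ‖ξ‖ ^ 2)) =o[nhds 0] fun ξ => ‖ξ‖ ^ 2 :=
    ((Complex.reCLM.isBigO_comp _ _).trans_isLittleO hFT).congr_left fun ξ => by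
      simp [re_integral_exp_neg_I_mul_mul hk (by fun_prop : Measurable fun x => inner ℝ x ξ),
        -Complex.ofReal_pow]
  have hmoment : ∫⁻ x, ENNReal.ofReal (‖x‖ ^ 2 * k x) ≤ ENNReal.ofReal (n * (2 * A)) := by
    calc ∫⁻ x, ENNReal.ofReal (‖x‖ ^ 2 * k x)
        = ∑ i, ∫⁻ x, ENNReal.ofReal (x i ^ 2 * k x) :=
          lintegral_ofReal_norm_sq_mul_eq_sum hk_cont.aemeasurable hk_nonneg
      _ ≤ Finset.univ.card • ENNReal.ofReal (2 * A) :=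
          Finset.sum_le_card_nsmul _ _ _ fun i _ => by
            simpa only [EuclideanSpace.inner_basisFun_real] using
              lintegral_inner_sq_mul_le_of_isLittleO hk hk_nonneg hk_int hφ
                ((EuclideanSpace.basisFun (Fin n) ℝ).orthonormal.1 i)
      _ = ENNReal.ofReal (n * (2 * A)) := by
          rw [Finset.card_univ, Fintype.card_fin, ← ENNReal.ofReal_nsmul, nsmul_eq_mul]
  obtain ⟨hint, hle⟩ := integrable_and_integral_le_of_lintegral_ofReal_le (by fun_prop)
    (Eventually.of_forall fun x => mul_nonneg (sq_nonneg ‖x‖) (hk_nonneg x)) (by positivity)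
    hmoment
  refine ⟨hint, ?_⟩
  rw [one_div_mul_eq_div]
  exact div_le_of_le_mul₀ (by positivity) hA.le (by linarith)

/-- Proposition 1.2, part of (ii) ⟹ (i): the second-order expansion of the
Fourier transform at the origin implies finiteness of the second moment and
the bound (1/(2n)) ∫ |x|² k ≤ A. -/
theorem stmt_1 (n : ℕ) (hn : 0 < n) (k : EuclideanSpace ℝ (Fin n) → ℝ)
    (hk_cont : Continuous k)
    (hk_bdd : ∃ C : ℝ, ∀ x, |k x| ≤ C)
    (hk_nonneg : ∀ x, 0 ≤ k x)
    (hk_int : ∫ x, k x = 1)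
    (A : ℝ) (hA : 0 < A)
    (hFT : (fun ξ : EuclideanSpace ℝ (Fin n) =>
        (∫ x, Complex.exp (-(Complex.I * ((inner ℝ x ξ : ℝ) : ℂ))) * (k x : ℂ))
          - (1 - (A : ℂ) * (‖ξ‖ ^ 2 : ℝ)))
      =o[nhds (0 : EuclideanSpace ℝ (Fin n))] (fun ξ => ‖ξ‖ ^ 2)) :
    Integrable (fun x : EuclideanSpace ℝ (Fin n) => ‖x‖ ^ 2 * k x) ∧
      (1 / (2 * n)) * ∫ x, ‖x‖ ^ 2 * k x ≤ A :=
  stmt_1_general n k hk_cont hk_nonneg hk_int A hA hFT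
end

section
/- Let γ solve the nonlocal one-phase Stefan problem γ_t = d∫ k(x-y)γ⁺(t,y)dy - dγ⁺(t,x) with continuous-on-Ω̄₀ initial data γ₀ satisfying (initial-onephase). If x ∈ ℝ^n \ Ω̄₀ and s(x) is the first time γ(·, x) reaches 0, then ℓ₀ = d ∫₀^{s(x)} ∫_{ℝ^n} k(x-y) γ⁺(τ, y) dy dτ, and consequently s(x) ≥ ℓ₀ / (d ‖γ₀‖_{C(Ω̄₀)}). In particular there exists t₀ > 0 such that Ω(t) = Ω(0) for all 0 ≤ t ≤ t₀. -/
open MeasureTheory Filter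

/-- A classical bounded solution of the nonlocal one-phase Stefan problem. -/
def IsNonlocalStefanSol {n : ℕ} (d : ℝ) (k : EuclideanSpace ℝ (Fin n) → ℝ)
    (γ₀ : EuclideanSpace ℝ (Fin n) → ℝ)
    (γ : ℝ → EuclideanSpace ℝ (Fin n) → ℝ) : Prop :=
  (∀ x, γ 0 x = γ₀ x) ∧
  (∀ x, ContinuousOn (fun t => γ t x) (Set.Ici 0)) ∧
  (∀ t, Measurable (γ t)) ∧
  (∀ t > 0, ∃ C : ℝ, ∀ x, |γ t x| ≤ C) ∧
  (∀ t > 0, ∀ x, HasDerivAt (fun s => γ s x)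
      (d * (∫ y, k (x - y) * max (γ t y) 0) - d * max (γ t x) 0) t)

/-- Energy balance at the first touching time, lower bound for the waiting
time, and initial stagnation of the free boundary. -/
theorem stmt_11 (n : ℕ) (hn : 0 < n) (d : ℝ) (hd : 0 < d)
    (k : EuclideanSpace ℝ (Fin n) → ℝ)
    (hk_cont : Continuous k)
    (hk_bdd : ∃ C : ℝ, ∀ x, |k x| ≤ C)
    (hk_nonneg : ∀ x, 0 ≤ k x)
    (hk0 : 0 < k 0)
    (hk_int : ∫ x, k x = 1)
    (ℓ₀ : ℝ) (hℓ₀ : 0 < ℓ₀)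
    (Ω₀ : Set (EuclideanSpace ℝ (Fin n)))
    (hΩ₀_open : IsOpen Ω₀) (hΩ₀_bdd : Bornology.IsBounded Ω₀)
    (hΩ₀_ne : Ω₀.Nonempty)
    (γ₀ : EuclideanSpace ℝ (Fin n) → ℝ)
    (hγ₀_meas : Measurable γ₀)
    (hγ₀_out : ∀ x ∉ closure Ω₀, γ₀ x = -ℓ₀)
    (hγ₀_in : ∀ x ∈ closure Ω₀, 0 ≤ γ₀ x)
    (hγ₀_ne : ∃ x ∈ closure Ω₀, γ₀ x ≠ 0)
    (hγ₀_cont : ContinuousOn γ₀ (closure Ω₀))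
    (γ : ℝ → EuclideanSpace ℝ (Fin n) → ℝ)
    (hγ : IsNonlocalStefanSol d k γ₀ γ)
    (C : ℝ) (hC_pos : 0 < C)
    (hC : ∀ y ∈ closure Ω₀, |γ₀ y| ≤ C)
    (hmax : ∀ t ≥ (0:ℝ), ∀ y, max (γ t y) 0 ≤ C)
    (x : EuclideanSpace ℝ (Fin n)) (hx : x ∉ closure Ω₀)
    (sx : ℝ) (hsx_pos : 0 < sx)
    (hsx0 : γ sx x = 0)
    (hsx_neg : ∀ t ∈ Set.Ico (0:ℝ) sx, γ t x < 0) :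
    (ℓ₀ = d * ∫ τ in (0:ℝ)..sx, ∫ y, k (x - y) * max (γ τ y) 0) ∧
    sx ≥ ℓ₀ / (d * C) ∧
    ∃ t₀ > (0:ℝ), ∀ t, 0 ≤ t → t ≤ t₀ →
      {z | 0 ≤ γ t z} = {z | 0 ≤ γ 0 z} := by
  obtain ⟨hγinit, hγcont, hγmeas, hγbdd, hγderiv⟩ := hγ
  set h : EuclideanSpace ℝ (Fin n) → ℝ → ℝ :=
    fun z t => ∫ y, k (z - y) * max (γ t y) 0 with hh
  -- k is integrable
  have hkI : Integrable k := by
    by_contra hcon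
    rw [integral_undef hcon] at hk_int; norm_num at hk_int
  have hkIz : ∀ z : EuclideanSpace ℝ (Fin n), Integrable (fun y => k (z - y)) :=
    fun z => hkI.comp_sub_left z
  have hkz_int1 : ∀ z : EuclideanSpace ℝ (Fin n), ∫ y, k (z - y) = 1 := by
    intro z; rw [integral_sub_left_eq_self k _ z, hk_int]
  have hmeasF : ∀ (z : EuclideanSpace ℝ (Fin n)) (t : ℝ),
      AEStronglyMeasurable (fun y => k (z - y) * max (γ t y) 0) volume := by
    intro z t
    exact ((hk_cont.comp (continuous_const.sub continuous_id)).measurable.mul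
      ((hγmeas t).max measurable_const)).aestronglyMeasurable
  have hboundF : ∀ (z : EuclideanSpace ℝ (Fin n)) (t : ℝ), 0 ≤ t →
      ∀ y, ‖k (z - y) * max (γ t y) 0‖ ≤ C * k (z - y) := by
    intro z t ht y
    rw [Real.norm_eq_abs, abs_of_nonneg (mul_nonneg (hk_nonneg _) (le_max_right _ _))]
    calc k (z - y) * max (γ t y) 0 ≤ k (z - y) * C :=
          mul_le_mul_of_nonneg_left (hmax t ht y) (hk_nonneg _)
      _ = C * k (z - y) := mul_comm _ _
  have hIF : ∀ (z : EuclideanSpace ℝ (Fin n)) (t : ℝ), 0 ≤ t →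
      Integrable (fun y => k (z - y) * max (γ t y) 0) := by
    intro z t ht
    refine Integrable.mono ((hkIz z).const_mul C) (hmeasF z t) (ae_of_all _ fun y => ?_)
    refine (hboundF z t ht y).trans ?_
    rw [Real.norm_eq_abs]; exact le_abs_self _
  -- bounds on h
  have hh_nonneg : ∀ z t, 0 ≤ h z t := by
    intro z t
    exact integral_nonneg fun y => mul_nonneg (hk_nonneg _) (le_max_right _ _)
  have hh_le : ∀ z t, 0 ≤ t → h z t ≤ C := by
    intro z t ht
    calc h z t ≤ ∫ y, C * k (z - y) := by
          refine integral_mono (hIF z t ht) ((hkIz z).const_mul C) fun y => ?_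
          refine le_trans ?_ (hboundF z t ht y)
          rw [Real.norm_eq_abs]; exact le_abs_self _
      _ = C * ∫ y, k (z - y) := integral_const_mul _ _
      _ = C := by rw [hkz_int1 z, mul_one]
  -- continuity of h z on Ici 0
  have hh_cont : ∀ z, ContinuousOn (h z) (Set.Ici 0) := by
    intro z t ht
    refine continuousWithinAt_of_dominated
      (F := fun t y => k (z - y) * max (γ t y) 0) (bound := fun y => C * k (z - y))
      (Eventually.of_forall fun s => hmeasF z s) ?_ ((hkIz z).const_mul C)
      (ae_of_all _ fun y => ?_)
    · filter_upwards [self_mem_nhdsWithin] with s hs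
      exact ae_of_all _ fun y => hboundF z s hs y
    · exact ((hγcont y t ht).max continuousWithinAt_const).const_mul _
  have hh_II : ∀ z a b, 0 ≤ a → a ≤ b →
      IntervalIntegrable (fun t => d * h z t) volume a b := by
    intro z a b ha hab
    refine (continuousOn_const.mul ((hh_cont z).mono ?_)).intervalIntegrable
    rw [Set.uIcc_of_le hab]
    exact fun s hs => le_trans ha hs.1
  -- key FTC identity on intervals where γ · z is negative
  have key : ∀ (z : EuclideanSpace ℝ (Fin n)) a b, 0 ≤ a → a < b →
      (∀ t ∈ Set.Ioo a b, γ t z < 0) →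
      γ b z - γ a z = ∫ t in a..b, d * h z t := by
    intro z a b ha hab hneg
    rw [intervalIntegral.integral_eq_sub_of_hasDeriv_right_of_le hab.le
      ((hγcont z).mono fun s hs => le_trans ha hs.1)
      (fun t ht => ?_) (hh_II z a b ha hab.le)]
    have ht0 : 0 < t := lt_of_le_of_lt ha ht.1
    have := (hγderiv t ht0 z).hasDerivWithinAt (s := Set.Ioi t)
    have hmz : max (γ t z) 0 = 0 := max_eq_right (hneg t ht).le
    rw [hmz, mul_zero, sub_zero] at this
    exact this
  -- lemma2: waiting time lower bound + energy balance
  have lem2 : ∀ (z : EuclideanSpace ℝ (Fin n)) b, 0 < b → γ 0 z = -ℓ₀ →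
      γ b z = 0 → (∀ t ∈ Set.Ico (0:ℝ) b, γ t z < 0) →
      (ℓ₀ = d * ∫ t in (0:ℝ)..b, h z t) ∧ ℓ₀ / (d * C) ≤ b := by
    intro z b hb h0 hbz hneg
    have hkey := key z 0 b le_rfl hb fun t ht => hneg t ⟨ht.1.le, ht.2⟩
    rw [hbz, h0, sub_neg_eq_add, zero_add] at hkey
    rw [intervalIntegral.integral_const_mul] at hkey
    constructor
    · exact hkey
    · have hle : ∫ t in (0:ℝ)..b, h z t ≤ ∫ t in (0:ℝ)..b, C := by
        refine intervalIntegral.integral_mono_on hb.le ?_ intervalIntegrable_const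
          fun s hs => hh_le z s hs.1
        refine ((hh_cont z).mono ?_).intervalIntegrable
        rw [Set.uIcc_of_le hb.le]
        exact fun s hs => hs.1
      rw [intervalIntegral.integral_const, smul_eq_mul, sub_zero] at hle
      rw [div_le_iff₀ (by positivity)]
      calc ℓ₀ = d * ∫ t in (0:ℝ)..b, h z t := hkey
        _ ≤ d * (b * C) := by nlinarith
        _ = b * (d * C) := by ring
  -- lemma3: once nonnegative, stays nonnegative
  have lem3 : ∀ (z : EuclideanSpace ℝ (Fin n)) t, 0 ≤ γ 0 z → 0 ≤ t → 0 ≤ γ t z := by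
    intro z t h0 ht
    by_contra hcon
    push_neg at hcon
    have ht0 : 0 < t := by
      rcases ht.lt_or_eq with h | h
      · exact h
      · exfalso; rw [← h] at hcon; linarith
    set A : Set ℝ := Set.Icc 0 t ∩ (fun s => γ s z) ⁻¹' Set.Ici 0 with hA
    have hAne : A.Nonempty := ⟨0, ⟨le_rfl, ht⟩, h0⟩
    have hAc : IsClosed A :=
      ContinuousOn.preimage_isClosed_of_isClosed
        ((hγcont z).mono fun s hs => hs.1) isClosed_Icc isClosed_Ici
    have hAcp : IsCompact A := (isCompact_Icc).of_isClosed_subset hAc Set.inter_subset_left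
    set τ := sSup A with hτ
    have hτA : τ ∈ A := hAcp.sSup_mem hAne
    have hτt : τ ≤ t := hτA.1.2
    have hτlt : τ < t := by
      rcases hτt.lt_or_eq with h | h
      · exact h
      · exfalso; have := hτA.2; rw [h] at this; exact absurd this (not_le.mpr hcon)
    have hneg : ∀ s ∈ Set.Ioo τ t, γ s z < 0 := by
      intro s hs
      by_contra hc
      push_neg at hc
      have : s ∈ A := ⟨⟨le_trans hτA.1.1 hs.1.le, hs.2.le⟩, hc⟩
      exact absurd (le_csSup hAcp.bddAbove this) (not_le.mpr hs.1)
    have hkey := key z τ t hτA.1.1 hτlt hneg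
    have hint : 0 ≤ ∫ s in τ..t, d * h z s :=
      intervalIntegral.integral_nonneg hτlt.le
        fun u _ => mul_nonneg hd.le (hh_nonneg z u)
    have := hτA.2
    simp only [Set.mem_preimage, Set.mem_Ici] at this
    linarith
  refine ⟨?_, ?_, ?_⟩
  · have h0x : γ 0 x = -ℓ₀ := by rw [hγinit x, hγ₀_out x hx]
    exact (lem2 x sx hsx_pos h0x hsx0 hsx_neg).1
  · have h0x : γ 0 x = -ℓ₀ := by rw [hγinit x, hγ₀_out x hx]
    exact (lem2 x sx hsx_pos h0x hsx0 hsx_neg).2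
  · refine ⟨ℓ₀ / (2 * d * C), by positivity, fun t ht ht₀ => ?_⟩
    ext z
    simp only [Set.mem_setOf_eq]
    constructor
    · -- 0 ≤ γ t z → 0 ≤ γ 0 z
      intro htz
      by_contra h0z
      push_neg at h0z
      have hzout : z ∉ closure Ω₀ := by
        intro hmem
        have := hγ₀_in z hmem
        rw [hγinit z] at h0z; linarith
      have h0z' : γ 0 z = -ℓ₀ := by rw [hγinit z, hγ₀_out z hzout]
      have ht0 : 0 < t := by
        rcases ht.lt_or_eq with hlt | heq
        · exact hlt
        · exfalso; rw [← heq] at htz; linarith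
      set A : Set ℝ := Set.Icc 0 t ∩ (fun s => γ s z) ⁻¹' Set.Ici 0 with hA
      have hAne : A.Nonempty := ⟨t, ⟨ht, le_rfl⟩, htz⟩
      have hAc : IsClosed A :=
        ContinuousOn.preimage_isClosed_of_isClosed
          ((hγcont z).mono fun s hs => hs.1) isClosed_Icc isClosed_Ici
      have hAcp : IsCompact A := (isCompact_Icc).of_isClosed_subset hAc Set.inter_subset_left
      set τ := sInf A with hτ
      have hτA : τ ∈ A := hAcp.sInf_mem hAne
      have hτ0 : 0 ≤ τ := hτA.1.1
      have hτpos : 0 < τ := by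
        rcases hτ0.lt_or_eq with hlt | heq
        · exact hlt
        · exfalso
          have := hτA.2
          rw [← heq] at this
          simp only [Set.mem_preimage, Set.mem_Ici] at this
          linarith
      have hneg : ∀ s ∈ Set.Ico (0:ℝ) τ, γ s z < 0 := by
        intro s hs
        by_contra hc
        push_neg at hc
        have : s ∈ A := ⟨⟨hs.1, le_trans hs.2.le hτA.1.2⟩, hc⟩
        exact absurd (csInf_le hAcp.bddBelow this) (not_le.mpr hs.2)
      -- γ τ z = 0
      have hτz : γ τ z = 0 := by
        have hge : 0 ≤ γ τ z := hτA.2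
        have hle : γ τ z ≤ 0 := by
          have hcw : ContinuousWithinAt (fun s => γ s z) (Set.Ico 0 τ) τ :=
            ((hγcont z) τ (le_trans hτ0 le_rfl)).mono fun s hs => hs.1
          have hne : (nhdsWithin τ (Set.Ico 0 τ)).NeBot := by
            rw [← mem_closure_iff_nhdsWithin_neBot, closure_Ico hτpos.ne]
            exact ⟨hτ0, le_rfl⟩
          exact le_of_tendsto hcw
            (eventually_nhdsWithin_of_forall fun s hs => (hneg s hs).le)
        linarith
      have := (lem2 z τ hτpos h0z' hτz hneg).2
      have hlt2 : ℓ₀ / (2 * d * C) < ℓ₀ / (d * C) := by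
        rw [div_lt_div_iff₀ (by positivity) (by positivity)]
        nlinarith [mul_pos hℓ₀ (mul_pos hd hC_pos)]
      linarith [hτA.1.2]
    · intro h0z
      exact lem3 z t h0z ht
end

section
/- Consider the 1-D problem γ_t = ∫_ℝ k_*(x-y)γ⁺(t,y)dy - γ⁺(t,x) with kernel k_*(x) = 1/(4σ) for 1-σ ≤ |x| ≤ 1+σ and 0 otherwise (0 < σ < 1/4), and initial data γ(0,x) = c₀ on (-1/4, 1/4), γ(0,x) = -ℓ₀ elsewhere, where 2ℓ₀ < c₀. Then for x ∈ (-1/4, 1/4) and times t before the first touching time t₁, γ(t,x) = c₀ e^{-t}; moreover for x* outside (-1/4,1/4) the energy balance ℓ₀ = c₀(1 - e^{-t₁}) ∫_{-1/4}^{1/4} k_*(x*-y) dy holds at the first touching time, the quantity ∫_{-1/4}^{1/4} k_*(x*-y)dy ≤ 1/2 with equality exactly when x* ∈ [-5/4+σ, -3/4-σ] ∪ [3/4+σ, 5/4-σ], and therefore the set first reaching zero outside (-1/4,1/4) is [-5/4+σ, -3/4-σ] ∪ [3/4+σ, 5/4-σ], disjoint from the closure of (-1/4, 1/4): the free boundary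 jumps. -/
/-!
While `γ < 0` off the plateau `(-1/4, 1/4)`, the source term at a plateau point vanishes, since
the annulus `1 - σ ≤ |x - y| ≤ 1 + σ` around it misses the plateau. So on the plateau `γ` solves
`γ' = -γ⁺` and equals `c₀ e^{-t}`. Off the plateau `γ` is negative, so `γ' = c₀ e^{-t} J(x)`,
where `J(x) = ∫_{-1/4}^{1/4} k_*(x - y) dy` is the kernel mass the plateau sees from `x`, and
`γ(t₁, x) = -ℓ₀ + c₀ (1 - e^{-t₁}) J(x)`. Only one of the two bands of the annulus can meet the
plateau, so `J ≤ 1/2`, with equality exactly when a whole band fits inside it. As `γ(t₁, ·) ≤ 0`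
off the plateau and vanishes somewhere, `ℓ₀ = c₀ (1 - e^{-t₁}) / 2`, and `γ(t₁, ·)` vanishes
exactly where `J = 1/2`.
-/

open MeasureTheory Filter Set Topology NNReal

theorem ODE_solution_unique_of_hasDerivAt_Ioo {E : Type*} [NormedAddCommGroup E]
    [NormedSpace ℝ E] {v : ℝ → E → E} {K : ℝ≥0} {f g : ℝ → E} {a b : ℝ}
    (hv : ∀ t, LipschitzWith K (v t))
    (hf : ContinuousOn f (Icc a b)) (hf' : ∀ t ∈ Ioo a b, HasDerivAt f (v t (f t)) t)
    (hg : ContinuousOn g (Icc a b)) (hg' : ∀ t ∈ Ioo a b, HasDerivAt g (v t (g t)) t)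
    (ha : f a = g a) : EqOn f g (Icc a b) := by
  intro t ht
  rcases ht.1.eq_or_lt with rfl | hat
  · exact ha
  have hab : a < b := hat.trans_le ht.2
  -- Grönwall on `[s, t]` for `a < s`, then let `s` tend to `a`
  have hbound : ∀ s ∈ Ioo a t,
      dist (f t) (g t) ≤ dist (f s) (g s) * Real.exp (K * (t - s)) := fun s hs =>
    dist_le_of_trajectories_ODE hv (hf.mono (Icc_subset_Icc hs.1.le ht.2))
      (fun u hu => (hf' u ⟨hs.1.trans_le hu.1, hu.2.trans_le ht.2⟩).hasDerivWithinAt)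
      (hg.mono (Icc_subset_Icc hs.1.le ht.2))
      (fun u hu => (hg' u ⟨hs.1.trans_le hu.1, hu.2.trans_le ht.2⟩).hasDerivWithinAt)
      le_rfl t ⟨hs.2.le, le_rfl⟩
  have hcont : ∀ h : ℝ → E, ContinuousOn h (Icc a b) → Tendsto h (𝓝[>] a) (𝓝 (h a)) :=
    fun h hh => ((continuousWithinAt_Icc_iff_Ici hab).1 (hh a ⟨le_rfl, hab.le⟩)).mono
      Ioi_subset_Ici_self
  have hlim : Tendsto (fun s => dist (f s) (g s) * Real.exp (K * (t - s))) (𝓝[>] a)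
      (𝓝 (dist (f a) (g a) * Real.exp (K * (t - a)))) :=
    ((hcont f hf).dist (hcont g hg)).mul
      ((by fun_prop : Continuous fun s => Real.exp (K * (t - s))).continuousAt.tendsto.mono_left
        nhdsWithin_le_nhds)
  rw [ha, dist_self, zero_mul] at hlim
  exact dist_le_zero.1 (ge_of_tendsto hlim (eventually_of_mem (Ioo_mem_nhdsGT hat) hbound))

lemma hasDerivAt_exp_neg (t : ℝ) :
    HasDerivAt (fun s => Real.exp (-s)) (-Real.exp (-t)) t := by
  simpa using (hasDerivAt_neg t).exp

lemma eq_mul_exp_neg_of_hasDerivAt_neg_max_zero {f : ℝ → ℝ} {c T : ℝ} (hc : 0 ≤ c)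
    (hf : ContinuousOn f (Icc 0 T)) (hf' : ∀ t ∈ Ioo 0 T, HasDerivAt f (-max (f t) 0) t)
    (h0 : f 0 = c) : ∀ t ∈ Icc 0 T, f t = c * Real.exp (-t) := by
  refine ODE_solution_unique_of_hasDerivAt_Ioo (v := fun _ y => -max y 0)
    (fun _ => (lipschitzWith_posPart (α := ℝ)).neg) hf hf' (by fun_prop) (fun t _ => ?_)
    (by simp [h0])
  rw [max_eq_left (by positivity)]
  exact ((hasDerivAt_exp_neg t).const_mul c).congr_deriv (by ring)

lemma eq_add_mul_one_sub_exp_neg_of_hasDerivAt {f : ℝ → ℝ} {A T : ℝ} (hT : 0 ≤ T)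
    (hf : ContinuousOn f (Icc 0 T))
    (hf' : ∀ t ∈ Ioo 0 T, HasDerivAt f (A * Real.exp (-t)) t) :
    f T = f 0 + A * (1 - Real.exp (-T)) := by
  refine ODE_solution_unique_of_hasDerivAt_Ioo (K := 0) (v := fun t _ => A * Real.exp (-t))
    (g := fun t => f 0 + A * (1 - Real.exp (-t))) (fun _ => LipschitzWith.const _) hf hf'
    (by fun_prop) (fun t _ => ?_) (by simp) ⟨hT, le_rfl⟩
  exact ((((hasDerivAt_exp_neg t).const_sub 1).const_mul A).const_add (f 0)).congr_deriv
    (by ring)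

def intervalOverlap (a b c d : ℝ) : ℝ := max (min b d - max a c) 0

section intervalOverlap

variable {a b c d : ℝ}

lemma intervalOverlap_eq_zero_of_le (h : b ≤ c) : intervalOverlap a b c d = 0 :=
  max_eq_right (by linarith [min_le_left b d, le_max_right a c])

lemma intervalOverlap_eq_zero_of_le' (h : d ≤ a) : intervalOverlap a b c d = 0 :=
  max_eq_right (by linarith [min_le_right b d, le_max_left a c])

lemma intervalOverlap_le (h : c ≤ d) : intervalOverlap a b c d ≤ d - c :=
  max_le (by linarith [min_le_right b d, le_max_right a c]) (by linarith)

lemma intervalOverlap_eq_iff (h : c < d) :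
    intervalOverlap a b c d = d - c ↔ a ≤ c ∧ d ≤ b := by
  unfold intervalOverlap
  constructor
  · intro he
    have : min b d - max a c = d - c := by
      rcases max_choice (min b d - max a c) 0 with hm | hm <;> rw [hm] at he <;> linarith
    exact ⟨by linarith [min_le_right b d, le_max_left a c],
      by linarith [min_le_left b d, le_max_right a c]⟩
  · rintro ⟨hac, hdb⟩
    rw [min_eq_right hdb, max_eq_right hac, max_eq_left (by linarith)]

lemma integral_indicator_Icc_const (hab : a ≤ b) (k : ℝ) :
    ∫ y in a..b, (Icc c d).indicator (fun _ => k) y = k * intervalOverlap a b c d := by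
  rw [intervalIntegral.integral_of_le hab, ← integral_Icc_eq_integral_Ioc,
    setIntegral_indicator measurableSet_Icc, setIntegral_const, Icc_inter_Icc,
    Real.volume_real_Icc, smul_eq_mul, mul_comm]
  rfl

end intervalOverlap

noncomputable def annularKernel (σ x : ℝ) : ℝ :=
  if 1 - σ ≤ |x| ∧ |x| ≤ 1 + σ then 1 / (4 * σ) else 0

lemma annularKernel_sub_eq_zero {σ x y : ℝ} (hσ : σ ≤ 1 / 2)
    (hx : x ∈ Ioo (-(1/4) : ℝ) (1/4)) (hy : y ∈ Ioo (-(1/4) : ℝ) (1/4)) :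
    annularKernel σ (x - y) = 0 := by
  have : |x - y| < 1 - σ :=
    abs_sub_lt_iff.2 ⟨by linarith [hx.2, hy.1], by linarith [hx.1, hy.2]⟩
  exact if_neg fun h => by linarith [h.1]

lemma annularKernel_sub_eq_indicator {σ : ℝ} (hσ : σ < 1) (x y : ℝ) :
    annularKernel σ (x - y) =
      (Icc (x - 1 - σ) (x - 1 + σ)).indicator (fun _ => 1 / (4 * σ)) y
        + (Icc (x + 1 - σ) (x + 1 + σ)).indicator (fun _ => 1 / (4 * σ)) y := by
  have hdisj : Disjoint (Icc (x - 1 - σ) (x - 1 + σ)) (Icc (x + 1 - σ) (x + 1 + σ)) :=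
    disjoint_left.2 fun y h₁ h₂ => by linarith [h₁.2, h₂.1]
  have hmem : (1 - σ ≤ |x - y| ∧ |x - y| ≤ 1 + σ) ↔
      y ∈ Icc (x - 1 - σ) (x - 1 + σ) ∪ Icc (x + 1 - σ) (x + 1 + σ) := by
    simp only [mem_union, mem_Icc]
    rcases abs_cases (x - y) with ⟨h, _⟩ | ⟨h, _⟩ <;> rw [h] <;> constructor <;> grind
  rw [← congrFun (indicator_union_of_disjoint hdisj _) y, annularKernel, indicator,
    if_congr hmem rfl rfl]
  congr

lemma integral_annularKernel_sub {σ a b : ℝ} (hσ : σ < 1) (hab : a ≤ b) (x : ℝ) :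
    ∫ y in a..b, annularKernel σ (x - y) = 1 / (4 * σ) *
      (intervalOverlap a b (x - 1 - σ) (x - 1 + σ)
        + intervalOverlap a b (x + 1 - σ) (x + 1 + σ)) := by
  have hint : ∀ c d, IntervalIntegrable ((Icc c d).indicator fun _ => 1 / (4 * σ)) volume a b :=
    fun c d => ⟨intervalIntegrable_const.1.indicator measurableSet_Icc,
      intervalIntegrable_const.2.indicator measurableSet_Icc⟩
  simp_rw [annularKernel_sub_eq_indicator hσ x]
  rw [intervalIntegral.integral_add (hint _ _) (hint _ _), integral_indicator_Icc_const hab,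
    integral_indicator_Icc_const hab, mul_add]

section plateauMass

variable {σ x : ℝ}

lemma integral_annularKernel_sub_of_nonpos (hσ : σ ≤ 3 / 4) (hx : x ≤ 0) :
    ∫ y in (-(1/4) : ℝ)..(1/4), annularKernel σ (x - y) =
      1 / (4 * σ) * intervalOverlap (-(1/4)) (1/4) (x + 1 - σ) (x + 1 + σ) := by
  rw [integral_annularKernel_sub (by linarith) (by norm_num),
    intervalOverlap_eq_zero_of_le' (c := x - 1 - σ) (by linarith), zero_add]

lemma integral_annularKernel_sub_of_nonneg (hσ : σ ≤ 3 / 4) (hx : 0 ≤ x) :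
    ∫ y in (-(1/4) : ℝ)..(1/4), annularKernel σ (x - y) =
      1 / (4 * σ) * intervalOverlap (-(1/4)) (1/4) (x - 1 - σ) (x - 1 + σ) := by
  rw [integral_annularKernel_sub (by linarith) (by norm_num),
    intervalOverlap_eq_zero_of_le (d := x + 1 + σ) (by linarith), add_zero]

lemma integral_annularKernel_sub_le_half (hσ : 0 < σ) (hσ' : σ ≤ 3 / 4) :
    ∫ y in (-(1/4) : ℝ)..(1/4), annularKernel σ (x - y) ≤ 1 / 2 := by
  have h : (1 / 2 : ℝ) = 1 / (4 * σ) * (2 * σ) := by field_simp; norm_num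
  rcases le_total x 0 with hx | hx
  · rw [integral_annularKernel_sub_of_nonpos hσ' hx, h]
    gcongr
    exact (intervalOverlap_le (by linarith)).trans_eq (by ring)
  · rw [integral_annularKernel_sub_of_nonneg hσ' hx, h]
    gcongr
    exact (intervalOverlap_le (by linarith)).trans_eq (by ring)

lemma integral_annularKernel_sub_eq_half_iff (hσ : 0 < σ) (hσ' : σ ≤ 3 / 4) :
    ∫ y in (-(1/4) : ℝ)..(1/4), annularKernel σ (x - y) = 1 / 2 ↔
      x ∈ Icc (-(5/4) + σ) (-(3/4) - σ) ∪ Icc ((3/4) + σ) ((5/4) - σ) := by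
  have h : (1 / 2 : ℝ) = 1 / (4 * σ) * (2 * σ) := by field_simp; norm_num
  rw [h, mem_union, mem_Icc, mem_Icc]
  rcases le_total x 0 with hx | hx
  · rw [integral_annularKernel_sub_of_nonpos hσ' hx, mul_right_inj' (by positivity),
      show 2 * σ = x + 1 + σ - (x + 1 - σ) by ring, intervalOverlap_eq_iff (by linarith)]
    constructor
    · rintro ⟨h₁, h₂⟩
      exact Or.inl ⟨by linarith, by linarith⟩
    · rintro (⟨h₁, h₂⟩ | ⟨h₁, h₂⟩) <;> constructor <;> linarith
  · rw [integral_annularKernel_sub_of_nonneg hσ' hx, mul_right_inj' (by positivity),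
      show 2 * σ = x - 1 + σ - (x - 1 - σ) by ring, intervalOverlap_eq_iff (by linarith)]
    constructor
    · rintro ⟨h₁, h₂⟩
      exact Or.inr ⟨by linarith, by linarith⟩
    · rintro (⟨h₁, h₂⟩ | ⟨h₁, h₂⟩) <;> constructor <;> linarith

end plateauMass

lemma integral_mul_max_zero_eq_setIntegral {α : Type*} [MeasurableSpace α] {μ : Measure α}
    {k φ : α → ℝ} {s : Set α} (hs : MeasurableSet s) (hφ : ∀ y ∉ s, φ y ≤ 0) :
    ∫ y, k y * max (φ y) 0 ∂μ = ∫ y in s, k y * max (φ y) 0 ∂μ := by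
  rw [← integral_indicator hs]
  congr 1 with y
  by_cases hy : y ∈ s
  · rw [indicator_of_mem hy]
  · rw [indicator_of_notMem hy, max_eq_right (hφ y hy), mul_zero]

section beforeFirstTouch

variable {σ c₀ t₁ x : ℝ} {γ : ℝ → ℝ → ℝ}

lemma eq_mul_exp_neg_of_mem_plateau (hσ : σ ≤ 1 / 2) (hc₀ : 0 ≤ c₀)
    (hcont : ContinuousOn (fun t => γ t x) (Ici 0))
    (hpde : ∀ t > (0:ℝ), ∀ x, HasDerivAt (fun s => γ s x)
      ((∫ y, annularKernel σ (x - y) * max (γ t y) 0) - max (γ t x) 0) t)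
    (hneg : ∀ t ∈ Ico (0:ℝ) t₁, ∀ y ∉ Ioo (-(1/4) : ℝ) (1/4), γ t y < 0)
    (hx : x ∈ Ioo (-(1/4) : ℝ) (1/4)) (h0 : γ 0 x = c₀) :
    ∀ t ∈ Ico (0:ℝ) t₁, γ t x = c₀ * Real.exp (-t) := by
  intro t ht
  have hder : ∀ s ∈ Ioo 0 t, HasDerivAt (fun s => γ s x) (-max (γ s x) 0) s := by
    intro s hs
    have hsource : ∫ y, annularKernel σ (x - y) * max (γ s y) 0 = 0 := by
      rw [integral_mul_max_zero_eq_setIntegral measurableSet_Ioo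
        fun y hy => (hneg s ⟨hs.1.le, hs.2.trans ht.2⟩ y hy).le]
      exact setIntegral_eq_zero_of_forall_eq_zero fun y hy => by
        rw [annularKernel_sub_eq_zero hσ hx hy, zero_mul]
    simpa [hsource] using hpde s hs.1 x
  exact eq_mul_exp_neg_of_hasDerivAt_neg_max_zero hc₀ (hcont.mono Icc_subset_Ici_self) hder h0
    t ⟨ht.1, le_rfl⟩

lemma eq_at_first_touch_of_notMem_plateau (hc₀ : 0 ≤ c₀) (ht₁ : 0 ≤ t₁)
    (hcont : ContinuousOn (fun t => γ t x) (Ici 0))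
    (hpde : ∀ t > (0:ℝ), ∀ x, HasDerivAt (fun s => γ s x)
      ((∫ y, annularKernel σ (x - y) * max (γ t y) 0) - max (γ t x) 0) t)
    (hneg : ∀ t ∈ Ico (0:ℝ) t₁, ∀ y ∉ Ioo (-(1/4) : ℝ) (1/4), γ t y < 0)
    (hplateau : ∀ y ∈ Ioo (-(1/4) : ℝ) (1/4), ∀ t ∈ Ico (0:ℝ) t₁,
      γ t y = c₀ * Real.exp (-t))
    (hx : x ∉ Ioo (-(1/4) : ℝ) (1/4)) :
    γ t₁ x = γ 0 x + c₀ * (1 - Real.exp (-t₁)) *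
      ∫ y in (-(1/4) : ℝ)..(1/4), annularKernel σ (x - y) := by
  rw [intervalIntegral.integral_of_le (by norm_num), integral_Ioc_eq_integral_Ioo]
  set J := ∫ y in Ioo (-(1/4) : ℝ) (1/4), annularKernel σ (x - y)
  have hder : ∀ t ∈ Ioo 0 t₁, HasDerivAt (fun s => γ s x) (c₀ * J * Real.exp (-t)) t := by
    intro t ht
    have hneg_t := hneg t ⟨ht.1.le, ht.2⟩
    have hsource : ∫ y, annularKernel σ (x - y) * max (γ t y) 0 = c₀ * J * Real.exp (-t) := by
      rw [integral_mul_max_zero_eq_setIntegral measurableSet_Ioo fun y hy => (hneg_t y hy).le,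
        setIntegral_congr_fun measurableSet_Ioo fun y hy => by
          rw [hplateau y hy t ⟨ht.1.le, ht.2⟩, max_eq_left (by positivity)],
        integral_mul_const]
      ring
    simpa [hsource, max_eq_right (hneg_t x hx).le] using hpde t ht.1 x
  rw [eq_add_mul_one_sub_exp_neg_of_hasDerivAt ht₁ (hcont.mono Icc_subset_Ici_self) hder]
  ring

end beforeFirstTouch

section atFirstTouch

variable {σ ℓ₀ A : ℝ} {u : ℝ → ℝ}

lemma eq_mul_half_of_touch (hσ : 0 < σ) (hσ' : σ ≤ 1 / 4) (hA : 0 ≤ A)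
    (hu : ∀ x ∉ Ioo (-(1/4) : ℝ) (1/4),
      u x = -ℓ₀ + A * ∫ y in (-(1/4) : ℝ)..(1/4), annularKernel σ (x - y))
    (hnonpos : ∀ x ∉ Ioo (-(1/4) : ℝ) (1/4), u x ≤ 0)
    (htouch : ∃ x ∉ Ioo (-(1/4) : ℝ) (1/4), u x = 0) :
    ℓ₀ = A * (1 / 2) := by
  -- the touching point sees kernel mass at most `1/2`, the point `1` sees exactly `1/2`
  obtain ⟨x₀, hx₀, hux₀⟩ := htouch
  have h₁ : (1 : ℝ) ∉ Ioo (-(1/4) : ℝ) (1/4) := fun h => by linarith [h.2]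
  have hle := hnonpos 1 h₁
  rw [hu 1 h₁, (integral_annularKernel_sub_eq_half_iff hσ (by linarith)).2
    (Or.inr ⟨by linarith, by linarith⟩)] at hle
  have hx₀ := hu x₀ hx₀
  nlinarith [integral_annularKernel_sub_le_half (x := x₀) hσ (by linarith)]

lemma setOf_notMem_plateau_and_eq_zero (hσ : 0 < σ) (hσ' : σ ≤ 3 / 4) (hA : 0 < A)
    (hu : ∀ x ∉ Ioo (-(1/4) : ℝ) (1/4),
      u x = -ℓ₀ + A * ∫ y in (-(1/4) : ℝ)..(1/4), annularKernel σ (x - y))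
    (hℓ₀ : ℓ₀ = A * (1 / 2)) :
    {x | x ∉ Ioo (-(1/4) : ℝ) (1/4) ∧ u x = 0} =
      Icc (-(5/4) + σ) (-(3/4) - σ) ∪ Icc ((3/4) + σ) ((5/4) - σ) := by
  have hzero_iff : ∀ x ∉ Ioo (-(1/4) : ℝ) (1/4),
      u x = 0 ↔ ∫ y in (-(1/4) : ℝ)..(1/4), annularKernel σ (x - y) = 1 / 2 := fun x hx => by
    rw [hu x hx, hℓ₀, neg_add_eq_sub, ← mul_sub, mul_eq_zero, sub_eq_zero, or_iff_right hA.ne']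
  ext x
  rw [mem_ofPred_eq, ← integral_annularKernel_sub_eq_half_iff hσ hσ']
  refine ⟨fun ⟨hx, h⟩ => (hzero_iff x hx).1 h, fun h => ?_⟩
  have hx : x ∉ Ioo (-(1/4) : ℝ) (1/4) := fun hx => by
    rcases (integral_annularKernel_sub_eq_half_iff hσ hσ').1 h with ⟨-, h'⟩ | ⟨h', -⟩ <;>
      linarith [hx.1, hx.2]
  exact ⟨hx, (hzero_iff x hx).2 h⟩

end atFirstTouch

theorem stmt_16_general (σ c₀ ℓ₀ : ℝ) (hσ : 0 < σ) (hσ' : σ < 1 / 4)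
    (hc₀ : 0 < c₀)
    (kst : ℝ → ℝ)
    (hkst : ∀ x, kst x = if 1 - σ ≤ |x| ∧ |x| ≤ 1 + σ then 1 / (4 * σ) else 0)
    (γ : ℝ → ℝ → ℝ)
    (hγ_cont : ∀ x, ContinuousOn (fun t => γ t x) (Set.Ici 0))
    (hpde : ∀ t > (0:ℝ), ∀ x, HasDerivAt (fun s => γ s x)
        ((∫ y, kst (x - y) * max (γ t y) 0) - max (γ t x) 0) t)
    (hinit_in : ∀ x ∈ Set.Ioo (-(1/4) : ℝ) (1/4), γ 0 x = c₀)
    (hinit_out : ∀ x ∉ Set.Ioo (-(1/4) : ℝ) (1/4), γ 0 x = -ℓ₀)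
    (t₁ : ℝ) (ht₁_pos : 0 < t₁)
    (ht₁_before : ∀ t ∈ Set.Ico (0:ℝ) t₁, ∀ x ∉ Set.Ioo (-(1/4) : ℝ) (1/4),
      γ t x < 0)
    (ht₁_touch : ∃ x ∉ Set.Ioo (-(1/4) : ℝ) (1/4), γ t₁ x = 0) :
    (∀ x ∈ Set.Ioo (-(1/4) : ℝ) (1/4), ∀ t ∈ Set.Ico (0:ℝ) t₁,
        γ t x = c₀ * Real.exp (-t)) ∧
    (∀ xs ∉ Set.Ioo (-(1/4) : ℝ) (1/4), γ t₁ xs = 0 →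
        ℓ₀ = c₀ * (1 - Real.exp (-t₁)) * ∫ y in (-(1/4) : ℝ)..(1/4), kst (xs - y)) ∧
    (∀ xs ∉ Set.Ioo (-(1/4) : ℝ) (1/4),
        (∫ y in (-(1/4) : ℝ)..(1/4), kst (xs - y)) ≤ 1 / 2 ∧
        ((∫ y in (-(1/4) : ℝ)..(1/4), kst (xs - y)) = 1 / 2 ↔
          xs ∈ Set.Icc (-(5/4) + σ) (-(3/4) - σ) ∪
            Set.Icc ((3/4) + σ) ((5/4) - σ))) ∧
    ({x | x ∉ Set.Ioo (-(1/4) : ℝ) (1/4) ∧ γ t₁ x = 0} =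
        Set.Icc (-(5/4) + σ) (-(3/4) - σ) ∪ Set.Icc ((3/4) + σ) ((5/4) - σ)) ∧
    t₁ = -Real.log (1 - 2 * ℓ₀ / c₀) := by
  obtain rfl : kst = annularKernel σ := funext hkst
  have hσ_le : σ ≤ 3 / 4 := by linarith
  have hplateau : ∀ x ∈ Ioo (-(1/4) : ℝ) (1/4), ∀ t ∈ Ico (0:ℝ) t₁,
      γ t x = c₀ * Real.exp (-t) := fun x hx =>
    eq_mul_exp_neg_of_mem_plateau (by linarith) hc₀.le (hγ_cont x) hpde ht₁_before hx
      (hinit_in x hx)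
  have htouch : ∀ x ∉ Ioo (-(1/4) : ℝ) (1/4), γ t₁ x = -ℓ₀ + c₀ * (1 - Real.exp (-t₁)) *
      ∫ y in (-(1/4) : ℝ)..(1/4), annularKernel σ (x - y) := fun x hx => by
    rw [eq_at_first_touch_of_notMem_plateau hc₀.le ht₁_pos.le (hγ_cont x) hpde ht₁_before
      hplateau hx, hinit_out x hx]
  have hnonpos : ∀ x ∉ Ioo (-(1/4) : ℝ) (1/4), γ t₁ x ≤ 0 := fun x hx =>
    le_on_closure (fun t ht => (ht₁_before t ht x hx).le)
      (by rw [closure_Ico ht₁_pos.ne]; exact (hγ_cont x).mono Icc_subset_Ici_self)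
      continuousOn_const (by rw [closure_Ico ht₁_pos.ne]; exact ⟨ht₁_pos.le, le_rfl⟩)
  have hA : 0 < c₀ * (1 - Real.exp (-t₁)) :=
    mul_pos hc₀ (sub_pos.2 (Real.exp_lt_one_iff.2 (neg_lt_zero.2 ht₁_pos)))
  have hbalance := eq_mul_half_of_touch hσ hσ'.le hA.le htouch hnonpos ht₁_touch
  refine ⟨hplateau, fun x hx h => by linarith [htouch x hx],
    fun x _ => ⟨integral_annularKernel_sub_le_half hσ hσ_le,
      integral_annularKernel_sub_eq_half_iff hσ hσ_le⟩,
    setOf_notMem_plateau_and_eq_zero hσ hσ_le hA htouch hbalance, ?_⟩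
  have hexp : Real.exp (-t₁) = 1 - 2 * ℓ₀ / c₀ := by
    field_simp
    linarith
  rw [← hexp, Real.log_exp, neg_neg]

/-- Example 1: jumping phenomenon for the annular kernel
`k_* = (4σ)⁻¹ 𝟙_{1-σ ≤ |x| ≤ 1+σ}` in one dimension. -/
theorem stmt_16 (σ c₀ ℓ₀ : ℝ) (hσ : 0 < σ) (hσ' : σ < 1 / 4)
    (hc₀ : 0 < c₀) (hℓ₀ : 0 < ℓ₀) (hjump : 2 * ℓ₀ < c₀)
    (kst : ℝ → ℝ)
    (hkst : ∀ x, kst x = if 1 - σ ≤ |x| ∧ |x| ≤ 1 + σ then 1 / (4 * σ) else 0)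
    (γ : ℝ → ℝ → ℝ)
    (hγ_cont : ∀ x, ContinuousOn (fun t => γ t x) (Set.Ici 0))
    (hγ_meas : ∀ t, Measurable (γ t))
    (hpde : ∀ t > (0:ℝ), ∀ x, HasDerivAt (fun s => γ s x)
        ((∫ y, kst (x - y) * max (γ t y) 0) - max (γ t x) 0) t)
    (hinit_in : ∀ x ∈ Set.Ioo (-(1/4) : ℝ) (1/4), γ 0 x = c₀)
    (hinit_out : ∀ x ∉ Set.Ioo (-(1/4) : ℝ) (1/4), γ 0 x = -ℓ₀)
    (t₁ : ℝ) (ht₁_pos : 0 < t₁)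
    (ht₁_before : ∀ t ∈ Set.Ico (0:ℝ) t₁, ∀ x ∉ Set.Ioo (-(1/4) : ℝ) (1/4),
      γ t x < 0)
    (ht₁_touch : ∃ x ∉ Set.Ioo (-(1/4) : ℝ) (1/4), γ t₁ x = 0) :
    (∀ x ∈ Set.Ioo (-(1/4) : ℝ) (1/4), ∀ t ∈ Set.Ico (0:ℝ) t₁,
        γ t x = c₀ * Real.exp (-t)) ∧
    (∀ xs ∉ Set.Ioo (-(1/4) : ℝ) (1/4), γ t₁ xs = 0 →
        ℓ₀ = c₀ * (1 - Real.exp (-t₁)) * ∫ y in (-(1/4) : ℝ)..(1/4), kst (xs - y)) ∧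
    (∀ xs ∉ Set.Ioo (-(1/4) : ℝ) (1/4),
        (∫ y in (-(1/4) : ℝ)..(1/4), kst (xs - y)) ≤ 1 / 2 ∧
        ((∫ y in (-(1/4) : ℝ)..(1/4), kst (xs - y)) = 1 / 2 ↔
          xs ∈ Set.Icc (-(5/4) + σ) (-(3/4) - σ) ∪
            Set.Icc ((3/4) + σ) ((5/4) - σ))) ∧
    ({x | x ∉ Set.Ioo (-(1/4) : ℝ) (1/4) ∧ γ t₁ x = 0} =
        Set.Icc (-(5/4) + σ) (-(3/4) - σ) ∪ Set.Icc ((3/4) + σ) ((5/4) - σ)) ∧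
    t₁ = -Real.log (1 - 2 * ℓ₀ / c₀) :=
  stmt_16_general σ c₀ ℓ₀ hσ hσ' hc₀ kst hkst γ hγ_cont hpde hinit_in hinit_out t₁ ht₁_pos
    ht₁_before ht₁_touch
end

section
/- Let n ≥ 2, k̃(x) = 2^{-n}ω_n^{-1}·χ_{{|x|≤2}}(x), and A = B̄₂(0)\B₁(0). Then for every x ≠ 0, ∫_A k̃(x-y) dy < ∫_A k̃(-y) dy = (1 - 2^{-n}), i.e. the kernel mass captured from the annulus is strictly maximized at the center x = 0. -/
/-!
Since `k̃(x - y) = c · 1_{B̄₂(x)}(y)`, the integral over `A` is `c · |A ∩ B̄₂(x)|`, which at `x = 0`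
is `c · |A| = c (2ⁿ - 1) ωₙ`. For `x ≠ 0`, points `-ρ x / ‖x‖` with `ρ < 2` close to `2` lie in the
interior of `A` but at distance more than `2` from `x`; a neighbourhood of such a point has positive
measure and is missed by `B̄₂(x)`.
-/

open MeasureTheory Metric Module

section

variable {E : Type*} [NormedAddCommGroup E]

lemma setIntegral_ite_norm_sub_le [MeasurableSpace E] [OpensMeasurableSpace E] (μ : Measure E)
    (s : Set E) (x : E) (R c : ℝ) :
    ∫ y in s, (if ‖x - y‖ ≤ R then c else 0) ∂μ = c * μ.real (s ∩ closedBall x R) := by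
  classical
  have : (fun y => if ‖x - y‖ ≤ R then c else 0) = (closedBall x R).indicator fun _ => c := by
    ext y
    rw [Set.indicator_apply, mem_closedBall, dist_comm, dist_eq_norm]
  rw [this, setIntegral_indicator measurableSet_closedBall, setIntegral_const, smul_eq_mul,
    mul_comm]

variable [NormedSpace ℝ E]

lemma exists_norm_mem_Ioo_lt_norm_sub {x : E} (hx : x ≠ 0) {r R : ℝ} (hr : 0 ≤ r)
    (hrR : r < R) :
    ∃ z : E, r < ‖z‖ ∧ ‖z‖ < R ∧ R < ‖x - z‖ := by
  have hx' : 0 < ‖x‖ := norm_pos_iff.mpr hx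
  obtain ⟨ρ, hρ, hρR⟩ := exists_between (max_lt hrR (by linarith) : max r (R - ‖x‖) < R)
  obtain ⟨hrρ, hxρ⟩ := max_lt_iff.mp hρ
  have hρ₀ : 0 ≤ ρ := by linarith
  have hnorm : ‖(ρ / ‖x‖) • x‖ = ρ := by
    rw [norm_smul, Real.norm_of_nonneg (by positivity), div_mul_cancel₀ _ hx'.ne']
  refine ⟨-((ρ / ‖x‖) • x), by rwa [norm_neg, hnorm], by rwa [norm_neg, hnorm], ?_⟩
  have : x - -((ρ / ‖x‖) • x) = (1 + ρ / ‖x‖) • x := by module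
  rw [this, norm_smul, Real.norm_of_nonneg (by positivity), add_mul, one_mul,
    div_mul_cancel₀ _ hx'.ne']
  linarith

variable [MeasurableSpace E] [BorelSpace E] [FiniteDimensional ℝ E]
  (μ : Measure E) [μ.IsAddHaarMeasure]

lemma addHaar_real_closedBall_sdiff_ball (c : E) {r R : ℝ} (hr : 0 < r) (hrR : r ≤ R) :
    μ.real (closedBall c R \ ball c r) =
      (R ^ finrank ℝ E - r ^ finrank ℝ E) * μ.real (ball 0 1) := by
  have hball : μ.real (ball c r) = r ^ finrank ℝ E * μ.real (ball 0 1) := by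
    rw [measureReal_def, Measure.addHaar_ball_of_pos μ c hr, ENNReal.toReal_mul,
      ENNReal.toReal_ofReal (by positivity), measureReal_def]
  rw [measureReal_sdiff (ball_subset_closedBall.trans (closedBall_subset_closedBall hrR))
    measurableSet_ball measure_closedBall_lt_top.ne,
    Measure.addHaar_real_closedBall μ c (hr.le.trans hrR), hball, sub_mul]

lemma addHaar_real_closedBall_sdiff_ball_inter_closedBall_lt {x : E} (hx : x ≠ 0) {r R : ℝ}
    (hr : 0 ≤ r) (hrR : r < R) :
    μ.real (closedBall 0 R \ ball 0 r ∩ closedBall x R) < μ.real (closedBall 0 R \ ball 0 r) := by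
  obtain ⟨z, hz⟩ := exists_norm_mem_Ioo_lt_norm_sub hx hr hrR
  set A := closedBall (0 : E) R \ ball 0 r
  have hA : μ A ≠ ⊤ := measure_ne_top_of_subset Set.sdiff_subset measure_closedBall_lt_top.ne
  set U := {y : E | r < ‖y‖ ∧ ‖y‖ < R ∧ R < ‖x - y‖}
  have hU : IsOpen U := (isOpen_lt continuous_const continuous_norm).inter
    ((isOpen_lt continuous_norm continuous_const).inter
      (isOpen_lt (g := fun y => ‖x - y‖) continuous_const (by fun_prop)))
  have hUsub : U ⊆ A \ closedBall x R := by
    rintro y ⟨h₁, h₂, h₃⟩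
    simp only [A, Set.mem_sdiff, mem_closedBall, mem_ball, dist_zero_right, not_lt, not_le]
    exact ⟨⟨h₂.le, h₁.le⟩, by rwa [dist_comm, dist_eq_norm]⟩
  have hpos : 0 < μ.real (A \ closedBall x R) :=
    ENNReal.toReal_pos ((hU.measure_pos μ ⟨z, hz⟩).trans_le (measure_mono hUsub)).ne'
      (measure_ne_top_of_subset Set.sdiff_subset hA)
  have := measureReal_inter_add_sdiff (μ := μ) (s := A)
    (measurableSet_closedBall (x := x) (ε := R)) hA
  linarith

end

theorem stmt_19_general (n : ℕ)
    (ωn : ℝ)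
    (hωn : ωn = (volume (Metric.ball (0 : EuclideanSpace ℝ (Fin n)) 1)).toReal)
    (ktil : EuclideanSpace ℝ (Fin n) → ℝ)
    (hktil : ∀ x, ktil x = if ‖x‖ ≤ 2 then ((2:ℝ) ^ n)⁻¹ * ωn⁻¹ else 0)
    (A : Set (EuclideanSpace ℝ (Fin n)))
    (hA : A = Metric.closedBall (0 : EuclideanSpace ℝ (Fin n)) 2 \
      Metric.ball 0 1) :
    (∫ y in A, ktil (-y)) = 1 - ((2:ℝ) ^ n)⁻¹ ∧
    ∀ x : EuclideanSpace ℝ (Fin n), x ≠ 0 →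
      (∫ y in A, ktil (x - y)) < ∫ y in A, ktil (-y) := by
  set c := ((2:ℝ) ^ n)⁻¹ * ωn⁻¹ with hc
  obtain rfl : ktil = fun y => if ‖y‖ ≤ 2 then c else 0 := funext hktil
  have hωn_pos : 0 < ωn := hωn ▸
    ENNReal.toReal_pos (measure_ball_pos volume _ one_pos).ne' measure_ball_lt_top.ne
  have hcenter : ∫ y in A, (if ‖-y‖ ≤ 2 then c else 0) = c * volume.real A := by
    have hA₂ : A ∩ closedBall 0 2 = A := Set.inter_eq_left.mpr (hA ▸ Set.sdiff_subset)
    simpa only [zero_sub, hA₂] using setIntegral_ite_norm_sub_le volume A 0 2 c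
  have hvolA : volume.real A = (2 ^ n - 1) * ωn := by
    rw [hA, addHaar_real_closedBall_sdiff_ball volume 0 one_pos one_le_two,
      finrank_euclideanSpace_fin, one_pow, measureReal_def, ← hωn]
  refine ⟨?_, fun x hx => ?_⟩
  · rw [hcenter, hvolA, hc]
    field_simp
  · rw [hcenter, setIntegral_ite_norm_sub_le, hA]
    exact mul_lt_mul_of_pos_left
      (addHaar_real_closedBall_sdiff_ball_inter_closedBall_lt volume hx zero_le_one one_lt_two)
      (by positivity)

/-- The kernel mass captured from the annulus `A = B̄₂ \ B₁` is strictly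
maximized at the center: `∫_A k̃(x-y) dy < ∫_A k̃(-y) dy = 1 - 2^{-n}` for
all `x ≠ 0`. -/
theorem stmt_19 (n : ℕ) (hn : 2 ≤ n)
    (ωn : ℝ)
    (hωn : ωn = (volume (Metric.ball (0 : EuclideanSpace ℝ (Fin n)) 1)).toReal)
    (ktil : EuclideanSpace ℝ (Fin n) → ℝ)
    (hktil : ∀ x, ktil x = if ‖x‖ ≤ 2 then ((2:ℝ) ^ n)⁻¹ * ωn⁻¹ else 0)
    (A : Set (EuclideanSpace ℝ (Fin n)))
    (hA : A = Metric.closedBall (0 : EuclideanSpace ℝ (Fin n)) 2 \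
      Metric.ball 0 1) :
    (∫ y in A, ktil (-y)) = 1 - ((2:ℝ) ^ n)⁻¹ ∧
    ∀ x : EuclideanSpace ℝ (Fin n), x ≠ 0 →
      (∫ y in A, ktil (x - y)) < ∫ y in A, ktil (-y) :=
  stmt_19_general n ωn hωn ktil hktil A hA
end
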